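/- Let H be a subgroup of G whose orientation states form an orthonormal basis of the frame space. For each character ψ : H →* ℂˣ define A_ψ := ∑_{h ∈ H} conj (ψ h) • Q h. Then: (i) each A_ψ is unitary, (A_ψ)ᴴ * A_ψ = 1 and A_ψ * (A_ψ)ᴴ = 1; and (ii) the family {A_ψ} satisfies the Knill–Laflamme conditions with respect to Π: for all characters ψ, ψ' of H, Π * (A_ψ)ᴴ * A_{ψ'} * Π = (if ψ = ψ' then (1 : ℂ) else 0) • Π. Hence {A_ψ} is a correctable error set for the non-ideal frame. -/

import Mathlib

/-!
The projectors `Q h`, `h ∈ H`, are mutually orthogonal Hermitian projections summing to `1`, so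
`A_ψ = ∑ conj (ψ h) • Q h` is unitary (characters of a finite group are unimodular) and
`A_ψᴴ * A_ψ' = ∑ ψ h conj (ψ' h) • Q h`. Covariance gives `Q g = ρ g * Q 1 * ρ g⁻¹` for
`ρ g = U_R g ⊗ U_S g`, and the group average `Π` of `ρ` absorbs `ρ g` on either side, so
`Π * Q g * Π` does not depend on `g`. Hence
`Π * A_ψᴴ * A_ψ' * Π = (∑ ψ h conj (ψ' h)) • Π * Q 1 * Π`, which vanishes for `ψ ≠ ψ'` by
orthogonality of characters; for `ψ = ψ'` unitarity and `Π * Π = Π` leave `Π`.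
-/

open scoped Kronecker
open Matrix

theorem star_coe_hom_units_apply {H : Type*} [Group H] [Finite H] (ψ : H →* ℂˣ) (h : H) :
    star (ψ h : ℂ) = ↑(ψ h)⁻¹ := by
  have hnorm : ‖(ψ h : ℂ)‖ = 1 :=
    Complex.norm_eq_one_of_pow_eq_one (by rw [← Units.val_pow_eq_pow_val, ← map_pow,
      pow_card_eq_one', map_one, Units.val_one]) Nat.card_pos.ne'
  rw [Units.val_inv_eq_inv_val, Complex.inv_eq_conj hnorm, Complex.star_def]

theorem sum_coe_hom_units_mul_star_eq_zero {H : Type*} [CommGroup H] [Fintype H]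
    {ψ ψ' : H →* ℂˣ} (hne : ψ ≠ ψ') : ∑ h, (ψ h : ℂ) * star (ψ' h : ℂ) = 0 := by
  have hne' : (Units.coeHom ℂ).comp (ψ / ψ') ≠ 1 := fun h1 =>
    hne <| div_eq_one.mp <| MonoidHom.ext fun h => Units.ext <| DFunLike.congr_fun h1 h
  simpa [star_coe_hom_units_apply, div_eq_mul_inv] using sum_hom_units_eq_zero _ hne'

section OrthogonalProjections

variable {ι n R : Type*} [Fintype ι] [DecidableEq ι] [Fintype n] [CommSemiring R]
  {P : ι → Matrix n n R}

theorem sum_smul_mul_sum_smul_of_orthogonal (hP : ∀ i j, P i * P j = if i = j then P i else 0)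
    (c d : ι → R) : (∑ i, c i • P i) * (∑ i, d i • P i) = ∑ i, (c i * d i) • P i := by
  simp_rw [Finset.sum_mul_sum, smul_mul_smul_comm, hP, smul_ite, smul_zero,
    Finset.sum_ite_eq, Finset.mem_univ, if_true]

variable [StarRing R] [DecidableEq n]

theorem sum_smul_unitary_of_orthogonal (hP : ∀ i j, P i * P j = if i = j then P i else 0)
    (hP_herm : ∀ i, (P i)ᴴ = P i) (hP_sum : ∑ i, P i = 1) (c : ι → R)
    (hc : ∀ i, star (c i) * c i = 1) :
    (∑ i, c i • P i)ᴴ * (∑ i, c i • P i) = 1 ∧ (∑ i, c i • P i) * (∑ i, c i • P i)ᴴ = 1 := by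
  have hA : (∑ i, c i • P i)ᴴ = ∑ i, star (c i) • P i := by
    simp [conjTranspose_sum, conjTranspose_smul, hP_herm]
  simp_rw [hA, sum_smul_mul_sum_smul_of_orthogonal hP, hc, mul_comm (c _), hc, one_smul]
  exact ⟨hP_sum, hP_sum⟩

end OrthogonalProjections

section GroupAverage

variable {G n K : Type*} [Group G] [Fintype G] [Fintype n] [Field K] {ρ : G → Matrix n n K}

def groupAverage (ρ : G → Matrix n n K) : Matrix n n K := (Fintype.card G : K)⁻¹ • ∑ g, ρ g

theorem mul_groupAverage (hρ : ∀ g h, ρ (g * h) = ρ g * ρ h) (k : G) :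
    ρ k * groupAverage ρ = groupAverage ρ := by
  rw [groupAverage, Matrix.mul_smul, Finset.mul_sum]
  simp_rw [← hρ]
  exact congrArg _ (Equiv.sum_comp (Equiv.mulLeft k) ρ)

theorem groupAverage_mul (hρ : ∀ g h, ρ (g * h) = ρ g * ρ h) (k : G) :
    groupAverage ρ * ρ k = groupAverage ρ := by
  rw [groupAverage, Matrix.smul_mul, Finset.sum_mul]
  simp_rw [← hρ]
  exact congrArg _ (Equiv.sum_comp (Equiv.mulRight k) ρ)

theorem groupAverage_mul_self [CharZero K] (hρ : ∀ g h, ρ (g * h) = ρ g * ρ h) :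
    groupAverage ρ * groupAverage ρ = groupAverage ρ := by
  conv_lhs => enter [1]; rw [groupAverage]
  rw [Matrix.smul_mul, Finset.sum_mul]
  simp_rw [mul_groupAverage hρ]
  rw [Finset.sum_const, Finset.card_univ, ← Nat.cast_smul_eq_nsmul K, smul_smul,
    inv_mul_cancel₀ (Nat.cast_ne_zero.mpr Fintype.card_ne_zero), one_smul]

theorem groupAverage_mul_sum_smul_mul_groupAverage {ι : Type*} [Fintype ι]
    (hρ : ∀ g h, ρ (g * h) = ρ g * ρ h) {Q : G → Matrix n n K}
    (hQ : ∀ g, Q g = ρ g * Q 1 * ρ g⁻¹) (f : ι → G) (c : ι → K) :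
    groupAverage ρ * (∑ i, c i • Q (f i)) * groupAverage ρ
      = (∑ i, c i) • (groupAverage ρ * Q 1 * groupAverage ρ) := by
  have hQ_avg : ∀ g, groupAverage ρ * Q g * groupAverage ρ
      = groupAverage ρ * Q 1 * groupAverage ρ := fun g => by
    rw [hQ g, Matrix.mul_assoc, Matrix.mul_assoc, mul_groupAverage hρ, ← Matrix.mul_assoc,
      ← Matrix.mul_assoc, groupAverage_mul hρ]
  simp_rw [Finset.mul_sum, Finset.sum_mul, Matrix.mul_smul, Matrix.smul_mul, hQ_avg,
    Finset.sum_smul]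

end GroupAverage

theorem conjTranspose_eq_apply_inv_of_unitary {G n R : Type*} [Group G] [Fintype n]
    [DecidableEq n] [Semiring R] [StarRing R] {U : G → Matrix n n R}
    (hmul : ∀ g h, U (g * h) = U g * U h) (hone : U 1 = 1) (hunit : ∀ g, (U g)ᴴ * U g = 1)
    (g : G) : (U g)ᴴ = U g⁻¹ := calc
  (U g)ᴴ = (U g)ᴴ * U (g * g⁻¹) := by rw [mul_inv_cancel, hone, Matrix.mul_one]
  _ = U g⁻¹ := by rw [hmul, ← Matrix.mul_assoc, hunit, Matrix.one_mul]

theorem Matrix.sum_kronecker {ι l m n p R : Type*} [CommSemiring R] (s : Finset ι)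
    (A : ι → Matrix l m R) (B : Matrix n p R) : (∑ i ∈ s, A i) ⊗ₖ B = ∑ i ∈ s, A i ⊗ₖ B :=
  map_sum ((kroneckerBilinear (R := R) (α := R)).flip B) A s

section RankOneKronecker

variable {ι m n R : Type*} [DecidableEq n] [CommSemiring R] [StarRing R]

theorem conjTranspose_vecMulVec_star_kronecker_one (x : m → R) :
    (vecMulVec x (star x) ⊗ₖ (1 : Matrix n n R))ᴴ = vecMulVec x (star x) ⊗ₖ 1 := by
  rw [conjTranspose_kronecker, conjTranspose_vecMulVec, star_star, conjTranspose_one]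

theorem vecMulVec_star_kronecker_one_mul_of_orthonormal [Fintype m] [Fintype n] [DecidableEq ι]
    {v : ι → m → R} (hv : ∀ i j, star (v i) ⬝ᵥ v j = if i = j then 1 else 0) (i j : ι) :
    (vecMulVec (v i) (star (v i)) ⊗ₖ (1 : Matrix n n R)) * (vecMulVec (v j) (star (v j)) ⊗ₖ 1)
      = if i = j then vecMulVec (v i) (star (v i)) ⊗ₖ 1 else 0 := by
  rw [← mul_kronecker_mul, vecMulVec_mul_vecMulVec, hv, Matrix.mul_one]
  split_ifs with hij
  · rw [hij, one_smul]
  · rw [zero_smul, vecMulVec_zero, zero_kronecker]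

theorem kronecker_mul_vecMulVec_star_kronecker_one_mul [Fintype m] [Fintype n]
    (A : Matrix m m R) (B B' : Matrix n n R) (x : m → R) :
    (A ⊗ₖ B) * (vecMulVec x (star x) ⊗ₖ 1) * (Aᴴ ⊗ₖ B')
      = vecMulVec (A *ᵥ x) (star (A *ᵥ x)) ⊗ₖ (B * B') := by
  rw [← mul_kronecker_mul, ← mul_kronecker_mul, mul_vecMulVec, vecMulVec_mul, star_mulVec,
    Matrix.mul_one]

end RankOneKronecker

theorem subgroup_A_psi_unitary_and_correctable_general
    {G : Type*} [CommGroup G] [Fintype G] [DecidableEq G] {r s : ℕ}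
    (U_R : G → Matrix (Fin r) (Fin r) ℂ)
    (U_S : G → Matrix (Fin s) (Fin s) ℂ)
    (hR_mul : ∀ g h : G, U_R (g * h) = U_R g * U_R h)
    (hR_one : U_R 1 = 1)
    (hR_unitary : ∀ g : G, (U_R g)ᴴ * U_R g = 1)
    (hS_mul : ∀ g h : G, U_S (g * h) = U_S g * U_S h)
    (hS_one : U_S 1 = 1)
    (φ : G → (Fin r → ℂ))
    (hcov : ∀ g h : G, (U_R h).mulVec (φ g) = φ (h * g))
    (Pg : Matrix (Fin r × Fin s) (Fin r × Fin s) ℂ)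
    (hPg : Pg = (Fintype.card G : ℂ)⁻¹ • ∑ g : G, (U_R g) ⊗ₖ (U_S g))
    (Q : G → Matrix (Fin r × Fin s) (Fin r × Fin s) ℂ)
    (hQ : ∀ g : G, Q g = (Matrix.vecMulVec (φ g) (star (φ g))) ⊗ₖ
        (1 : Matrix (Fin s) (Fin s) ℂ))
    (H : Subgroup G) [Fintype H] [DecidableEq (H →* ℂˣ)]
    (horthH : ∀ h h' : H,
      (∑ i : Fin r, star (φ (h : G) i) * φ (h' : G) i) = if h = h' then 1 else 0)
    (hcompleteH : ∑ h : H, Matrix.vecMulVec (φ (h : G)) (star (φ (h : G)))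
        = (1 : Matrix (Fin r) (Fin r) ℂ))
    (ψ ψ' : H →* ℂˣ)
    (A A' : Matrix (Fin r × Fin s) (Fin r × Fin s) ℂ)
    (hA : A = ∑ h : H, star ((ψ h : ℂ)) • Q (h : G))
    (hA' : A' = ∑ h : H, star ((ψ' h : ℂ)) • Q (h : G)) :
    (Aᴴ * A = 1 ∧ A * Aᴴ = 1) ∧
      Pg * Aᴴ * A' * Pg = (if ψ = ψ' then (1 : ℂ) else 0) • Pg := by
  set ρ : G → Matrix (Fin r × Fin s) (Fin r × Fin s) ℂ := fun g => U_R g ⊗ₖ U_S g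
  have hρ : ∀ g h, ρ (g * h) = ρ g * ρ h := fun g h => by
    simp only [ρ, hR_mul, hS_mul, mul_kronecker_mul]
  have hPg_avg : Pg = groupAverage ρ := hPg
  have hQ_mul : ∀ h k : H, Q h * Q k = if h = k then Q h else 0 := fun h k => by
    simp only [hQ]; exact vecMulVec_star_kronecker_one_mul_of_orthonormal horthH h k
  have hQ_herm : ∀ h : H, (Q h)ᴴ = Q h := fun h => by
    rw [hQ, conjTranspose_vecMulVec_star_kronecker_one]
  have hQ_sum : ∑ h : H, Q h = 1 := by
    simp only [hQ]; rw [← sum_kronecker, hcompleteH, one_kronecker_one]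
  have hQ_cov : ∀ g, Q g = ρ g * Q 1 * ρ g⁻¹ := fun g => by
    simp only [ρ, hQ]
    rw [← conjTranspose_eq_apply_inv_of_unitary hR_mul hR_one hR_unitary,
      kronecker_mul_vecMulVec_star_kronecker_one_mul, hcov, mul_one, ← hS_mul, mul_inv_cancel,
      hS_one]
  have hA_unitary : Aᴴ * A = 1 ∧ A * Aᴴ = 1 := by
    rw [hA]
    refine sum_smul_unitary_of_orthogonal hQ_mul hQ_herm hQ_sum _ fun h => ?_
    rw [star_star, star_coe_hom_units_apply, Units.mul_inv]
  refine ⟨hA_unitary, ?_⟩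
  split_ifs with hψ
  · subst hψ
    rw [one_smul, hA', ← hA, Matrix.mul_assoc Pg, hA_unitary.1, Matrix.mul_one, hPg_avg,
      groupAverage_mul_self hρ]
  · have hA_herm : Aᴴ = ∑ h : H, (ψ h : ℂ) • Q h := by
      simp only [hA, conjTranspose_sum, conjTranspose_smul, star_star, hQ_herm]
    rw [Matrix.mul_assoc Pg, hA_herm, hA', sum_smul_mul_sum_smul_of_orthogonal hQ_mul, hPg_avg,
      groupAverage_mul_sum_smul_mul_groupAverage hρ hQ_cov, sum_coe_hom_units_mul_star_eq_zero hψ,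
      zero_smul, zero_smul]

/-- **Correctable errors for a non-ideal frame.**  Let `H ≤ G` be a subgroup
whose orientation states form an orthonormal basis of the frame space.  For characters
`ψ, ψ'` of `H`, with `A_ψ := ∑_{h ∈ H} conj (ψ h) • Q h`:
(i) `A_ψ` is unitary, and (ii) the family `{A_ψ}` satisfies the Knill–Laflamme
conditions with respect to the gauge projector `Π`. -/
theorem subgroup_A_psi_unitary_and_correctable
    {G : Type*} [CommGroup G] [Fintype G] [DecidableEq G] {r s : ℕ}
    (U_R : G → Matrix (Fin r) (Fin r) ℂ)
    (U_S : G → Matrix (Fin s) (Fin s) ℂ)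
    (hR_mul : ∀ g h : G, U_R (g * h) = U_R g * U_R h)
    (hR_one : U_R 1 = 1)
    (hR_unitary : ∀ g : G, (U_R g)ᴴ * U_R g = 1)
    (hS_mul : ∀ g h : G, U_S (g * h) = U_S g * U_S h)
    (hS_one : U_S 1 = 1)
    (hS_unitary : ∀ g : G, (U_S g)ᴴ * U_S g = 1)
    (φ : G → (Fin r → ℂ))
    (hcov : ∀ g h : G, (U_R h).mulVec (φ g) = φ (h * g))
    (Pg : Matrix (Fin r × Fin s) (Fin r × Fin s) ℂ)
    (hPg : Pg = (Fintype.card G : ℂ)⁻¹ • ∑ g : G, (U_R g) ⊗ₖ (U_S g))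
    (Q : G → Matrix (Fin r × Fin s) (Fin r × Fin s) ℂ)
    (hQ : ∀ g : G, Q g = (Matrix.vecMulVec (φ g) (star (φ g))) ⊗ₖ
        (1 : Matrix (Fin s) (Fin s) ℂ))
    (H : Subgroup G) [Fintype H] [DecidableEq (H →* ℂˣ)]
    (horthH : ∀ h h' : H,
      (∑ i : Fin r, star (φ (h : G) i) * φ (h' : G) i) = if h = h' then 1 else 0)
    (hcompleteH : ∑ h : H, Matrix.vecMulVec (φ (h : G)) (star (φ (h : G)))
        = (1 : Matrix (Fin r) (Fin r) ℂ))
    (ψ ψ' : H →* ℂˣ)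
    (A A' : Matrix (Fin r × Fin s) (Fin r × Fin s) ℂ)
    (hA : A = ∑ h : H, star ((ψ h : ℂ)) • Q (h : G))
    (hA' : A' = ∑ h : H, star ((ψ' h : ℂ)) • Q (h : G)) :
    (Aᴴ * A = 1 ∧ A * Aᴴ = 1) ∧
      Pg * Aᴴ * A' * Pg = (if ψ = ψ' then (1 : ℂ) else 0) • Pg :=
  subgroup_A_psi_unitary_and_correctable_general U_R U_S hR_mul hR_one hR_unitary hS_mul hS_one φ
    hcov Pg hPg Q hQ H horthH hcompleteH ψ ψ' A A' hA hA'
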